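/- For any DAG D and natural number k, the k-closure cl_k(D) entails exactly the same d-separation statements with conditioning sets of size at most k as D: for all nodes a,b and all sets c with |c| ≤ k, a and b are d-separated given c in D if and only if they are d-separated (m-separated) given c in cl_k(D). -/

import Mathlib

/-- A mixed graph: directed edges `dir` and bidirected edges `bi`. -/
structure MixedGraph (V : Type) where
  dir : V → V → Prop
  bi : V → V → Prop

namespace MixedGraph

variable {V : Type} (G : MixedGraph V)

/-- symmetric view of bidirected adjacency -/
def biAdj (a b : V) : Prop := G.bi a b ∨ G.bi b a

/-- `step G u v hu hv` : an edge between `u` and `v` with arrowhead-at-`u` = `hu`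
and arrowhead-at-`v` = `hv`. -/
def step (u v : V) (hu hv : Bool) : Prop :=
  (hu = false ∧ hv = true ∧ G.dir u v) ∨
  (hu = true ∧ hv = false ∧ G.dir v u) ∨
  (hu = true ∧ hv = true ∧ G.biAdj u v)

/-- Walks in a mixed graph, recording the arrowhead marks of each traversed edge. -/
inductive Walk : V → V → Type _
  | nil (v : V) : Walk v v
  | cons {u v w : V} (hu hv : Bool) (h : G.step u v hu hv) (p : Walk v w) : Walk u w

variable {G}

def Walk.support : ∀ {a b : V}, G.Walk a b → List V
  | _, _, .nil v => [v]
  | _, _, .cons (u := u) _ _ _ p => u :: p.support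

/-- List of internal vertices together with the two arrowhead marks adjacent to them
(incoming mark, outgoing mark): a vertex is a collider iff both are `true`. -/
def Walk.marksInternal : ∀ {a b : V}, G.Walk a b → List (V × Bool × Bool)
  | _, _, .nil _ => []
  | _, _, .cons _ hv _ q =>
    match q with
    | .nil _ => []
    | .cons (u := m) hu' _ _ _ => (m, hv, hu') :: q.marksInternal

/-- The arrowhead mark at the first vertex of a walk (if nonempty). -/
def Walk.firstHead : ∀ {a b : V}, G.Walk a b → Option Bool
  | _, _, .nil _ => none
  | _, _, .cons hu _ _ _ => some hu

/-- The arrowhead mark at the last vertex of a walk (if nonempty). -/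
def Walk.lastHead : ∀ {a b : V}, G.Walk a b → Option Bool
  | _, _, .nil _ => none
  | _, _, .cons _ hv _ q =>
    match q with
    | .nil _ => some hv
    | .cons _ _ _ _ => q.lastHead

variable (G)

/-- Ancestorship in a mixed graph: directed edges only (reflexive). -/
def Anc (a b : V) : Prop := Relation.ReflTransGen G.dir a b

variable {G}

/-- A walk is d-connecting given `c` iff every collider on it is an ancestor of some
node of `c` and every non-collider is not in `c`. -/
def Walk.DConnecting (c : Set V) {a b : V} (w : G.Walk a b) : Prop :=
  ∀ m ∈ w.marksInternal,
    ((m.2.1 = true ∧ m.2.2 = true) → ∃ x ∈ c, G.Anc m.1 x) ∧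
    (¬ (m.2.1 = true ∧ m.2.2 = true) → m.1 ∉ c)

/-- A walk is active given `c` iff every collider on it is in `c` and every
non-collider is not in `c`. -/
def Walk.Active (c : Set V) {a b : V} (w : G.Walk a b) : Prop :=
  ∀ m ∈ w.marksInternal,
    ((m.2.1 = true ∧ m.2.2 = true) → m.1 ∈ c) ∧
    (¬ (m.2.1 = true ∧ m.2.2 = true) → m.1 ∉ c)

/-- A path is a walk without repeated vertices. -/
def Walk.IsPath {a b : V} (w : G.Walk a b) : Prop := w.support.Nodup

variable (G)

/-- d-connection: existence of a d-connecting path. -/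
def DConn (c : Set V) (a b : V) : Prop :=
  ∃ w : G.Walk a b, w.IsPath ∧ w.DConnecting c

/-- d-separation (m-separation in mixed graphs). -/
def DSep (c : Set V) (a b : V) : Prop := ¬ G.DConn c a b

/-- Adjacency in a mixed graph. -/
def Adj (a b : V) : Prop := G.dir a b ∨ G.dir b a ∨ G.biAdj a b

end MixedGraph

/-- View a directed graph as a mixed graph with no bidirected edges. -/
def ofDAG {V : Type} (E : V → V → Prop) : MixedGraph V := ⟨E, fun _ _ => False⟩

/-- Acyclicity of a directed graph. -/
def Acyclic {V : Type} (E : V → V → Prop) : Prop := ∀ a, ¬ Relation.TransGen E a a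

/-- `a, b` are `k`-covered in `E`: no conditioning set of size at most `k` d-separates them. -/
def KCovered {V : Type} (E : V → V → Prop) (k : ℕ) (a b : V) : Prop :=
  ∀ c : Finset V, c.card ≤ k → ¬ (ofDAG E).DSep (↑c) a b

/-- The `k`-closure of a DAG: every `k`-covered pair is adjacent, oriented by
ancestrality in `E`, bidirected when neither endpoint is an ancestor of the other. -/
def kClosure {V : Type} (E : V → V → Prop) (k : ℕ) : MixedGraph V where
  dir a b := KCovered E k a b ∧ Relation.TransGen E a b
  bi a b := KCovered E k a b ∧ KCovered E k b a ∧
    ¬ Relation.ReflTransGen E a b ∧ ¬ Relation.ReflTransGen E b a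

/-- Maximal ancestral graph: no directed cycles, no almost directed cycles,
and every non-adjacent pair of distinct nodes is d-separable. -/
def IsMAG {V : Type} (G : MixedGraph V) : Prop :=
  (∀ a, ¬ Relation.TransGen G.dir a a) ∧
  (∀ a b, Relation.TransGen G.dir a b → ¬ G.biAdj a b) ∧
  (∀ a b, a ≠ b → ¬ G.Adj a b → ∃ S : Set V, G.DSep S a b)

/-- k-Markov equivalence of two directed graphs. -/
def kMarkovEquiv {V : Type} (E₁ E₂ : V → V → Prop) (k : ℕ) : Prop :=
  ∀ a b, ∀ c : Finset V, c.card ≤ k →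
    ((ofDAG E₁).DSep (↑c) a b ↔ (ofDAG E₂).DSep (↑c) a b)

/-- Markov equivalence of two mixed graphs. -/
def MarkovEquiv {V : Type} (G₁ G₂ : MixedGraph V) : Prop :=
  ∀ a b, ∀ c : Set V, G₁.DSep c a b ↔ G₂.DSep c a b

namespace MixedGraph
namespace Walk

variable {V : Type} {G : MixedGraph V}

/-- length of a walk -/
def length : ∀ {a b : V}, G.Walk a b → ℕ
  | _, _, .nil _ => 0
  | _, _, .cons _ _ _ p => p.length + 1

/-- concatenation of walks -/
def append : ∀ {a b c : V}, G.Walk a b → G.Walk b c → G.Walk a c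
  | _, _, _, .nil _, q => q
  | _, _, _, .cons hu hv h p, q => .cons hu hv h (p.append q)

/-- junction marks helper -/
def jl (v : V) : Option Bool → Option Bool → List (V × Bool × Bool)
  | some h1, some h2 => [(v, h1, h2)]
  | _, _ => []

@[simp] lemma nil_append (q : G.Walk a c) : (Walk.nil a).append q = q := rfl
@[simp] lemma cons_append {u v b c : V} (hu hv : Bool) (h : G.step u v hu hv)
    (p : G.Walk v b) (q : G.Walk b c) :
    (Walk.cons hu hv h p).append q = Walk.cons hu hv h (p.append q) := rfl

@[simp] lemma length_nil : (Walk.nil (G := G) a).length = 0 := rfl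
@[simp] lemma length_cons {u v w : V} (hu hv : Bool) (h : G.step u v hu hv)
    (p : G.Walk v w) : (Walk.cons hu hv h p).length = p.length + 1 := rfl

@[simp] lemma support_nil : (Walk.nil (G := G) a).support = [a] := rfl
@[simp] lemma support_cons {u v w : V} (hu hv : Bool) (h : G.step u v hu hv)
    (p : G.Walk v w) : (Walk.cons hu hv h p).support = u :: p.support := rfl

@[simp] lemma firstHead_nil : (Walk.nil (G := G) a).firstHead = none := rfl
@[simp] lemma firstHead_cons {u v w : V} (hu hv : Bool) (h : G.step u v hu hv)
    (p : G.Walk v w) : (Walk.cons hu hv h p).firstHead = some hu := rfl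

@[simp] lemma lastHead_nil : (Walk.nil (G := G) a).lastHead = none := rfl

@[simp] lemma marksInternal_nil : (Walk.nil (G := G) a).marksInternal = [] := rfl

lemma marksInternal_cons {u v w : V} (hu hv : Bool) (h : G.step u v hu hv)
    (q : G.Walk v w) :
    (Walk.cons hu hv h q).marksInternal = jl v (some hv) q.firstHead ++ q.marksInternal := by
  cases q <;> rfl

lemma lastHead_cons_of_nil {u v : V} (hu hv : Bool) (h : G.step u v hu hv) :
    (Walk.cons hu hv h (Walk.nil v)).lastHead = some hv := rfl

lemma lastHead_cons_of_ne {u v w : V} (hu hv : Bool) (h : G.step u v hu hv)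
    (q : G.Walk v w) (hq : q.length ≠ 0) :
    (Walk.cons hu hv h q).lastHead = q.lastHead := by
  cases q with
  | nil => simp at hq
  | cons hu' hv' h' q' => rfl

lemma length_eq_zero : ∀ {a b : V} (w : G.Walk a b), w.length = 0 → a = b ∧ HEq w (Walk.nil (G := G) a)
  | _, _, .nil v, _ => ⟨rfl, HEq.rfl⟩

lemma exists_lastHead : ∀ {a b : V} (w : G.Walk a b), w.length ≠ 0 → ∃ x, w.lastHead = some x := by
  intro a b w
  induction w with
  | nil => simp
  | cons hu hv h q ih =>
    intro _
    cases q with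
    | nil => exact ⟨hv, rfl⟩
    | cons hu' hv' h' q' =>
      obtain ⟨x, hx⟩ := ih (by simp)
      exact ⟨x, hx⟩

lemma exists_firstHead : ∀ {a b : V} (w : G.Walk a b), w.length ≠ 0 → ∃ x, w.firstHead = some x := by
  intro a b w
  cases w with
  | nil => simp
  | cons hu hv h q => exact fun _ => ⟨hu, rfl⟩

@[simp] lemma length_append : ∀ {a b c : V} (p : G.Walk a b) (q : G.Walk b c),
    (p.append q).length = p.length + q.length := by
  intro a b c p q
  induction p with
  | nil => simp
  | cons hu hv h p ih => simp [ih]; omega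

lemma firstHead_append_of_ne {a b c : V} (p : G.Walk a b) (q : G.Walk b c)
    (hp : p.length ≠ 0) : (p.append q).firstHead = p.firstHead := by
  cases p with
  | nil => simp at hp
  | cons hu hv h p' => rfl

lemma lastHead_append_of_ne : ∀ {a b c : V} (p : G.Walk a b) (q : G.Walk b c),
    q.length ≠ 0 → (p.append q).lastHead = q.lastHead := by
  intro a b c p q hq
  induction p with
  | nil => simp
  | cons hu hv h p' ih =>
    rw [cons_append, lastHead_cons_of_ne _ _ _ _ (by simp; intro _ h2; exact hq h2)]
    exact ih _ hq

lemma support_append : ∀ {a b c : V} (p : G.Walk a b) (q : G.Walk b c),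
    (p.append q).support = p.support ++ q.support.tail := by
  intro a b c p q
  induction p with
  | nil =>
    cases q with
    | nil => rfl
    | cons hu hv h q' => rfl
  | cons hu hv h p' ih => simp [ih]

lemma end_mem_support : ∀ {a b : V} (w : G.Walk a b), b ∈ w.support := by
  intro a b w
  induction w with
  | nil => simp
  | cons hu hv h p ih => simpa using Or.inr ih

lemma marksInternal_append : ∀ {a b c : V} (p : G.Walk a b) (q : G.Walk b c),
    (p.append q).marksInternal
      = p.marksInternal ++ jl b p.lastHead q.firstHead ++ q.marksInternal := by
  intro a b c p q
  induction p with
  | nil => simp [jl]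
  | cons hu hv h p' ih =>
    cases p' with
    | nil =>
      rw [cons_append, nil_append, marksInternal_cons, marksInternal_cons,
        lastHead_cons_of_nil]
      simp [jl]
    | cons hu2 hv2 h2 p2 =>
      have e1 : ((Walk.cons hu2 hv2 h2 p2).append q).firstHead = some hu2 := rfl
      rw [cons_append, marksInternal_cons, e1, ih,
        show (Walk.cons hu hv h (Walk.cons hu2 hv2 h2 p2)).marksInternal
          = jl _ (some hv) (some hu2) ++ (Walk.cons hu2 hv2 h2 p2).marksInternal from rfl,
        lastHead_cons_of_ne hu hv h (Walk.cons hu2 hv2 h2 p2) (by simp)]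
      simp [marksInternal_cons, e1]

end Walk
end MixedGraph
namespace MixedGraph

variable {V : Type} {G : MixedGraph V}

lemma step_symm {u v : V} {hu hv : Bool} (h : G.step u v hu hv) : G.step v u hv hu := by
  rcases h with ⟨h1, h2, h3⟩ | ⟨h1, h2, h3⟩ | ⟨h1, h2, h3⟩
  · exact Or.inr (Or.inl ⟨h2, h1, h3⟩)
  · exact Or.inl ⟨h2, h1, h3⟩
  · exact Or.inr (Or.inr ⟨h2, h1, h3.symm⟩)

namespace Walk

/-- reversal of a walk -/
def reverse : ∀ {a b : V}, G.Walk a b → G.Walk b a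
  | _, _, .nil v => .nil v
  | _, _, .cons hu hv h p => p.reverse.append (.cons hv hu (step_symm h) (.nil _))

@[simp] lemma reverse_nil : (Walk.nil (G := G) a).reverse = .nil a := rfl

@[simp] lemma length_reverse : ∀ {a b : V} (w : G.Walk a b), w.reverse.length = w.length := by
  intro a b w
  induction w with
  | nil => rfl
  | cons hu hv h p ih => simp [reverse, ih]

lemma firstHead_reverse : ∀ {a b : V} (w : G.Walk a b), w.reverse.firstHead = w.lastHead := by
  intro a b w
  induction w with
  | nil => rfl
  | cons hu hv h p ih =>
    cases p with
    | nil => rfl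
    | cons hu2 hv2 h2 p2 =>
      rw [show (Walk.cons hu hv h (Walk.cons hu2 hv2 h2 p2)).reverse
          = (Walk.cons hu2 hv2 h2 p2).reverse.append (.cons hv hu (step_symm h) (.nil _)) from rfl,
        firstHead_append_of_ne _ _ (by simp), ih,
        lastHead_cons_of_ne hu hv h (Walk.cons hu2 hv2 h2 p2) (by simp)]

lemma lastHead_reverse : ∀ {a b : V} (w : G.Walk a b), w.reverse.lastHead = w.firstHead := by
  intro a b w
  cases w with
  | nil => rfl
  | cons hu hv h p =>
    rw [show (Walk.cons hu hv h p).reverse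
        = p.reverse.append (.cons hv hu (step_symm h) (.nil _)) from rfl,
      lastHead_append_of_ne _ _ (by simp), lastHead_cons_of_nil, firstHead_cons]

/-- swap the two marks -/
def mswap (m : V × Bool × Bool) : V × Bool × Bool := (m.1, m.2.2, m.2.1)

lemma marksInternal_reverse : ∀ {a b : V} (w : G.Walk a b),
    w.reverse.marksInternal = (w.marksInternal.map mswap).reverse := by
  intro a b w
  induction w with
  | nil => rfl
  | cons hu hv h p ih =>
    rw [show (Walk.cons hu hv h p).reverse
        = p.reverse.append (.cons hv hu (step_symm h) (.nil _)) from rfl,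
      marksInternal_append, ih, lastHead_reverse]
    cases p with
    | nil => rfl
    | cons hu2 hv2 h2 p2 =>
      simp [marksInternal_cons, jl, mswap]

lemma dconnecting_reverse {c : Set V} {a b : V} {w : G.Walk a b}
    (h : w.DConnecting c) : w.reverse.DConnecting c := by
  intro m hm
  rw [marksInternal_reverse, List.mem_reverse, List.mem_map] at hm
  obtain ⟨m', hm', rfl⟩ := hm
  have := h m' hm'
  refine ⟨fun hc => this.1 ⟨hc.2, hc.1⟩, fun hc => this.2 (fun hc2 => hc ⟨hc2.2, hc2.1⟩)⟩

lemma mem_jl {m : V × Bool × Bool} {v : V} {o1 o2 : Option Bool} (h : m ∈ jl v o1 o2) :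
    ∃ h1 h2, o1 = some h1 ∧ o2 = some h2 ∧ m = (v, h1, h2) := by
  cases o1 with
  | none => simp [jl] at h
  | some h1 =>
    cases o2 with
    | none => simp [jl] at h
    | some h2 => simp [jl] at h; exact ⟨h1, h2, rfl, rfl, h⟩

lemma length_ne_zero_of_lastHead {a b : V} {w : G.Walk a b} {x : Bool}
    (h : w.lastHead = some x) : w.length ≠ 0 := by
  cases w with
  | nil => simp at h
  | cons hu hv h' q => simp

lemma length_ne_zero_of_firstHead {a b : V} {w : G.Walk a b} {x : Bool}
    (h : w.firstHead = some x) : w.length ≠ 0 := by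
  cases w with
  | nil => simp at h
  | cons hu hv h' q => simp

lemma end_mem_support_tail : ∀ {a b : V} (w : G.Walk a b), w.length ≠ 0 → b ∈ w.support.tail := by
  intro a b w h
  cases w with
  | nil => simp at h
  | cons hu hv h' q => simpa using end_mem_support q

lemma exists_split {b : V} : ∀ {a : V} (w : G.Walk a b) (v : V), v ∈ w.support →
    ∃ (w1 : G.Walk a v) (w2 : G.Walk v b), w = w1.append w2
  | _, .nil u, v, h => by
      simp at h; subst h; exact ⟨.nil _, .nil _, rfl⟩
  | _, .cons (u := u) hu hv hst q, v, h => by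
      by_cases hva : v = u
      · subst hva; exact ⟨.nil _, .cons hu hv hst q, rfl⟩
      · have hmem : v ∈ q.support := by
          simp at h; tauto
        obtain ⟨q1, q2, rfl⟩ := exists_split q v hmem
        exact ⟨.cons hu hv hst q1, q2, rfl⟩

lemma exists_splice {b : V} : ∀ {a : V} (w : G.Walk a b), ¬ w.support.Nodup →
    ∃ (v : V) (w1 : G.Walk a v) (w2 : G.Walk v v) (w3 : G.Walk v b),
      w = w1.append (w2.append w3) ∧ w2.length ≠ 0
  | _, .nil u, h => by simp at h
  | _, .cons (u := u) hu hv hst q, hnd => by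
      by_cases ha : u ∈ q.support
      · obtain ⟨q1, q2, rfl⟩ := exists_split q u ha
        exact ⟨u, .nil u, .cons hu hv hst q1, q2, rfl, by simp⟩
      · have hq : ¬ q.support.Nodup := fun hq => hnd (by simp [List.nodup_cons, ha, hq])
        obtain ⟨v, q1, q2, q3, rfl, hq2⟩ := exists_splice q hq
        exact ⟨v, .cons hu hv hst q1, q2, q3, rfl, hq2⟩

end Walk
end MixedGraph
section DAGLemmas

open MixedGraph MixedGraph.Walk Relation

variable {V : Type} {E : V → V → Prop}

lemma step_ofDAG {u v : V} {hu hv : Bool} (h : (ofDAG E).step u v hu hv) :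
    (hu = false ∧ hv = true ∧ E u v) ∨ (hu = true ∧ hv = false ∧ E v u) := by
  rcases h with h | h | h
  · exact Or.inl h
  · exact Or.inr h
  · rcases h.2.2 with h' | h' <;> exact h'.elim

lemma dconnecting_tail {G : MixedGraph V} {c : Set V} {u v w : V} {hu hv : Bool}
    {h : G.step u v hu hv} {q : G.Walk v w}
    (hw : (Walk.cons hu hv h q).DConnecting c) : q.DConnecting c := by
  intro m hm
  exact hw m (by rw [marksInternal_cons]; exact List.mem_append_right _ hm)

lemma dconnecting_head {G : MixedGraph V} {c : Set V} {u v w x : V} {hu hv hu2 hv2 : Bool}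
    {h : G.step u v hu hv} {h2 : G.step v x hu2 hv2} {q : G.Walk x w}
    (hw : (Walk.cons hu hv h (Walk.cons hu2 hv2 h2 q)).DConnecting c) :
    ((hv = true ∧ hu2 = true) → ∃ d ∈ c, Relation.ReflTransGen G.dir v d) ∧
    (¬ (hv = true ∧ hu2 = true) → v ∉ c) :=
  hw (v, hv, hu2) (by rw [marksInternal_cons]; simp [jl])

/-- descend: a walk starting with a tail either witnesses ancestry into `c`
or is an initial directed segment reaching every later vertex. -/
lemma descend {c : Set V} : ∀ {x b : V} (w : (ofDAG E).Walk x b),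
    w.DConnecting c → w.firstHead = some false →
    (∃ d ∈ c, Relation.ReflTransGen E x d) ∨ ∀ y ∈ w.support.tail, Relation.TransGen E x y
  | _, _, .nil _, _, hf => by simp at hf
  | _, _, .cons (u := x) (v := r) hu hv hst q, hw, hf => by
      have hu0 : hu = false := by simpa using hf
      subst hu0
      have hE1 : E x r := by
        rcases step_ofDAG hst with h | h
        · exact h.2.2
        · simp at h
      have hv1 : hv = true := by
        rcases step_ofDAG hst with h | h
        · exact h.2.1
        · simp at h
      subst hv1
      cases q with
      | nil =>
        refine Or.inr ?_
        intro y hy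
        simp only [support_cons, support_nil, List.tail_cons, List.mem_singleton] at hy
        subst hy
        exact TransGen.single hE1
      | cons hu2 hv2 h2 q2 =>
        cases hu2 with
        | true =>
          obtain ⟨d, hd, hrd⟩ := (dconnecting_head hw).1 ⟨rfl, rfl⟩
          exact Or.inl ⟨d, hd, ReflTransGen.head hE1 hrd⟩
        | false =>
          rcases descend _ (dconnecting_tail hw) rfl with ⟨d, hd, hrd⟩ | hall
          · exact Or.inl ⟨d, hd, ReflTransGen.head hE1 hrd⟩
          · refine Or.inr ?_
            intro y hy
            simp only [support_cons, List.tail_cons, List.mem_cons] at hy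
            rcases hy with hy | hy
            · subst hy; exact TransGen.single hE1
            · exact TransGen.head hE1 (hall y hy)

/-- no walk out of a descendant of `v` towards `u` can start with a tail. -/
lemma noTailStart (hE : Acyclic E) {c0 : Set V} {v u : V} (hvu : ¬ ReflTransGen E v u)
    (hc0 : ∀ d ∈ c0, ¬ ReflTransGen E v d) :
    ∀ {x : V} (w : (ofDAG E).Walk x u), w.DConnecting c0 → ReflTransGen E v x →
      w.firstHead = some true
  | _, .nil _, _, hx => absurd hx hvu
  | _, .cons (u := x) (v := r) hu hv hst q, hw, hx => by
      cases hu with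
      | true => rfl
      | false =>
        exfalso
        have hE1 : E x r := by
          rcases step_ofDAG hst with h | h
          · exact h.2.2
          · simp at h
        have hv1 : hv = true := by
          rcases step_ofDAG hst with h | h
          · exact h.2.1
          · simp at h
        subst hv1
        have hr : ReflTransGen E v r := hx.tail hE1
        cases q with
        | nil => exact hvu hr
        | cons hu2 hv2 h2 q2 =>
          cases hu2 with
          | true =>
            obtain ⟨d, hd, hrd⟩ := (dconnecting_head hw).1 ⟨rfl, rfl⟩
            exact hc0 d hd (hr.trans hrd)
          | false =>
            have := noTailStart hE hvu hc0 _ (dconnecting_tail hw) hr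
            simp at this

/-- a walk starting outside the descendants of `v` has no internal vertex among them. -/
lemma noDescMark (hE : Acyclic E) {c0 : Set V} {v u : V} (hvu : ¬ ReflTransGen E v u)
    (hc0 : ∀ d ∈ c0, ¬ ReflTransGen E v d) :
    ∀ {x : V} (w : (ofDAG E).Walk x u), w.DConnecting c0 → ¬ ReflTransGen E v x →
      ∀ m ∈ w.marksInternal, ¬ ReflTransGen E v m.1
  | _, .nil _, _, _ => by simp
  | _, .cons (u := x) (v := r) hu hv hst q, hw, hx => by
      cases q with
      | nil => simp [marksInternal_cons, jl]
      | cons hu2 hv2 h2 q2 =>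
        have hr : ¬ ReflTransGen E v r := by
          intro hvr
          rcases step_ofDAG hst with h | h
          · -- E x r, hv = true
            have hv1 : hv = true := h.2.1
            subst hv1
            have hfq : (Walk.cons hu2 hv2 h2 q2).firstHead = some true :=
              noTailStart hE hvu hc0 _ (dconnecting_tail hw) hvr
            have hu21 : hu2 = true := by simpa using hfq
            subst hu21
            obtain ⟨d, hd, hrd⟩ := (dconnecting_head hw).1 ⟨rfl, rfl⟩
            exact hc0 d hd (hvr.trans hrd)
          · exact hx (hvr.tail h.2.2)
        intro m hm
        rw [marksInternal_cons] at hm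
        rcases List.mem_append.mp hm with hm | hm
        · obtain ⟨h1', h2', _, _, rfl⟩ := mem_jl hm
          exact hr
        · exact noDescMark hE hvu hc0 _ (dconnecting_tail hw) hr m hm

/-- key structural lemma: any walk from `v` to a non-descendant `u`, d-connecting given a
set disjoint from the descendants of `v`, starts with an arrowhead at `v` and avoids
descendants of `v` internally. -/
lemma startHead (hE : Acyclic E) {c0 : Set V} {v u : V} (hvu : ¬ ReflTransGen E v u)
    (hc0 : ∀ d ∈ c0, ¬ ReflTransGen E v d)
    (w : (ofDAG E).Walk v u) (hw : w.DConnecting c0) :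
    w.firstHead = some true ∧ ∀ m ∈ w.marksInternal, ¬ ReflTransGen E v m.1 := by
  refine ⟨noTailStart hE hvu hc0 w hw ReflTransGen.refl, ?_⟩
  obtain _ | @⟨_, r, _, hu, hv, hst, q⟩ := w
  · simp
  · have hu1 : hu = true := by
      have := noTailStart hE hvu hc0 _ hw (ReflTransGen.refl (a := v))
      simpa using this
    subst hu1
    have hE1 : E r v := by
      rcases step_ofDAG hst with h | h
      · simp at h
      · exact h.2.2
    have hr : ¬ ReflTransGen E v r := by
      intro hvr
      exact hE v (TransGen.tail' hvr hE1)
    intro m hm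
    rw [marksInternal_cons] at hm
    rcases List.mem_append.mp hm with hm | hm
    · obtain ⟨h1', h2', _, _, rfl⟩ := mem_jl hm
      exact hr
    · exact noDescMark hE hvu hc0 _ (dconnecting_tail hw) hr m hm

lemma endHead (hE : Acyclic E) {c0 : Set V} {u v : V} (hvu : ¬ ReflTransGen E v u)
    (hc0 : ∀ d ∈ c0, ¬ ReflTransGen E v d)
    (w : (ofDAG E).Walk u v) (hw : w.DConnecting c0) :
    w.lastHead = some true ∧ ∀ m ∈ w.marksInternal, ¬ ReflTransGen E v m.1 := by
  obtain ⟨h1, h2⟩ := startHead hE hvu hc0 w.reverse (dconnecting_reverse hw)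
  constructor
  · rw [← firstHead_reverse]; exact h1
  · intro m hm
    have : mswap m ∈ w.reverse.marksInternal := by
      rw [marksInternal_reverse, List.mem_reverse, List.mem_map]
      exact ⟨m, hm, rfl⟩
    exact h2 (mswap m) this

/-- From a d-connecting walk to a d-connecting path. -/
lemma walkToPath (hE : Acyclic E) {c : Set V} : ∀ (n : ℕ) {a b : V} (w : (ofDAG E).Walk a b),
    w.length ≤ n → w.DConnecting c →
    ∃ p : (ofDAG E).Walk a b, p.IsPath ∧ p.DConnecting c := by
  intro n
  induction n with
  | zero =>
    intro a b w hl hw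
    by_cases hnd : w.support.Nodup
    · exact ⟨w, hnd, hw⟩
    · obtain ⟨v, w1, w2, w3, rfl, h2⟩ := exists_splice w hnd
      exfalso
      rw [length_append, length_append] at hl
      omega
  | succ n ih =>
    intro a b w hl hw
    by_cases hnd : w.support.Nodup
    · exact ⟨w, hnd, hw⟩
    · obtain ⟨v, w1, w2, w3, rfl, h2⟩ := exists_splice w hnd
      set W := w1.append (w2.append w3) with hW
      have hmW : W.marksInternal
          = w1.marksInternal ++ jl v w1.lastHead (w2.append w3).firstHead
            ++ (w2.marksInternal ++ jl v w2.lastHead w3.firstHead ++ w3.marksInternal) := by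
        rw [hW, marksInternal_append, marksInternal_append]
      have hw23 : (w2.append w3).DConnecting c := by
        intro m hm
        refine hw m ?_
        rw [hW, marksInternal_append]
        exact List.mem_append_right _ hm
      have hw' : (w1.append w3).DConnecting c := by
        intro m hm
        rw [marksInternal_append] at hm
        rcases List.mem_append.mp hm with hm | hm
        · rcases List.mem_append.mp hm with hm | hm
          · exact hw m (by rw [hmW]; simp [hm])
          · -- junction
            obtain ⟨h1, h3, hl1, hf3, rfl⟩ := mem_jl hm
            obtain ⟨o1, ho1⟩ := exists_firstHead w2 h2
            obtain ⟨i2, hi2⟩ := exists_lastHead w2 h2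
            have hF1 : (v, h1, o1) ∈ W.marksInternal := by
              rw [hmW, firstHead_append_of_ne w2 w3 h2, ho1, hl1]
              simp [jl]
            have hF2 : (v, i2, h3) ∈ W.marksInternal := by
              rw [hmW, hi2, hf3]
              simp [jl]
            constructor
            · rintro ⟨rfl, rfl⟩
              cases o1 with
              | true => exact (hw _ hF1).1 ⟨rfl, rfl⟩
              | false =>
                rcases descend (w2.append w3) hw23
                    (by rw [firstHead_append_of_ne w2 w3 h2, ho1]) with hgood | hall
                · exact hgood
                · exfalso
                  refine hE v (hall v ?_)
                  rw [support_append]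
                  rw [List.tail_append_of_ne_nil]
                  · exact List.mem_append_left _ (end_mem_support_tail w2 h2)
                  · cases w2 with
                    | nil => simp at h2
                    | cons _ _ _ _ => simp
            · intro hnc
              cases h1 with
              | false => exact (hw _ hF1).2 (by simp)
              | true =>
                cases h3 with
                | true => exact absurd ⟨rfl, rfl⟩ hnc
                | false => exact (hw _ hF2).2 (by simp)
        · exact hw m (by rw [hmW]; simp [hm])
      refine ih (w1.append w3) ?_ hw'
      have : (w1.append (w2.append w3)).length ≤ n + 1 := hl
      rw [length_append, length_append] at this
      rw [length_append]
      omega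

end DAGLemmas
section Closure

open MixedGraph MixedGraph.Walk Relation

variable {V : Type} {E : V → V → Prop} {k : ℕ}

lemma edge_kCovered (hE : Acyclic E) {u v : V} (h : E u v) : KCovered E k u v := by
  intro c' _ hsep
  refine hsep ⟨Walk.cons false true (by rw [MixedGraph.step]; exact Or.inl ⟨rfl, rfl, h⟩) (.nil v), ?_, ?_⟩
  · have hne : u ≠ v := by
      rintro rfl
      exact hE u (TransGen.single h)
    simp [Walk.IsPath, hne]
  · intro m hm
    simp [marksInternal_cons, jl] at hm

lemma edge_cl (hE : Acyclic E) {u v : V} (h : E u v) : (kClosure E k).dir u v :=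
  ⟨edge_kCovered hE h, TransGen.single h⟩

lemma rtg_E_to_cl (hE : Acyclic E) {x y : V} (h : ReflTransGen E x y) :
    ReflTransGen (kClosure E k).dir x y :=
  ReflTransGen.mono (fun _ _ he => edge_cl hE he) _ _ h

lemma rtg_cl_to_E {x y : V} (h : ReflTransGen (kClosure E k).dir x y) :
    ReflTransGen E x y := by
  induction h with
  | refl => exact ReflTransGen.refl
  | tail _ h2 ih => exact ih.trans h2.2.to_reflTransGen

lemma mapWalk (hE : Acyclic E) : ∀ {a b : V} (w : (ofDAG E).Walk a b),
    ∃ w' : (kClosure E k).Walk a b, w'.support = w.support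
      ∧ w'.marksInternal = w.marksInternal ∧ w'.firstHead = w.firstHead
  | _, _, .nil v => ⟨.nil v, rfl, rfl, rfl⟩
  | _, _, .cons (u := x) (v := r) hu hv hst q => by
      obtain ⟨q', hs, hm, hf⟩ := mapWalk hE q
      rcases step_ofDAG hst with ⟨rfl, rfl, he⟩ | ⟨rfl, rfl, he⟩
      · refine ⟨.cons false true (by rw [MixedGraph.step]; exact Or.inl ⟨rfl, rfl, edge_cl hE he⟩) q', by simp [hs], ?_, rfl⟩
        rw [marksInternal_cons, marksInternal_cons, hm, hf]
      · refine ⟨.cons true false (by rw [MixedGraph.step]; exact Or.inr (Or.inl ⟨rfl, rfl, edge_cl hE he⟩)) q', by simp [hs], ?_, rfl⟩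
        rw [marksInternal_cons, marksInternal_cons, hm, hf]

lemma dconn_D_to_cl (hE : Acyclic E) {c : Set V} {a b : V}
    (h : (ofDAG E).DConn c a b) : (kClosure E k).DConn c a b := by
  obtain ⟨p, hp, hd⟩ := h
  obtain ⟨p', hs, hm, _⟩ := mapWalk (k := k) hE p
  refine ⟨p', by rw [Walk.IsPath, hs]; exact hp, ?_⟩
  intro m hmem
  rw [hm] at hmem
  refine ⟨fun hcol => ?_, fun hnc => (hd m hmem).2 hnc⟩
  obtain ⟨d, hdc, hanc⟩ := (hd m hmem).1 hcol
  exact ⟨d, hdc, ReflTransGen.mono (fun _ _ he => edge_cl hE he) _ _ hanc⟩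

lemma kcov_dconn {u v : V} (hk : KCovered E k u v) (c' : Finset V) (hc : c'.card ≤ k) :
    (ofDAG E).DConn ↑c' u v := by
  have := hk c' hc
  rw [MixedGraph.DSep, not_not] at this
  exact this

/-- directed walk realizing `TransGen`. -/
lemma dirWalk {x y : V} (h : TransGen E x y) :
    ∃ W : (ofDAG E).Walk x y, W.firstHead = some false ∧ W.lastHead = some true ∧
      ∀ m ∈ W.marksInternal, (m.2.1 = true ∧ m.2.2 = false) ∧ TransGen E x m.1 := by
  induction h using TransGen.head_induction_on with
  | single hxy =>
    refine ⟨.cons false true (by rw [MixedGraph.step]; exact Or.inl ⟨rfl, rfl, hxy⟩) (.nil _), rfl, rfl, ?_⟩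
    intro m hm
    simp [marksInternal_cons, jl] at hm
  | head hxc _ ih =>
    obtain ⟨W', h1, h2, h3⟩ := ih
    refine ⟨.cons false true (by rw [MixedGraph.step]; exact Or.inl ⟨rfl, rfl, hxc⟩) W', rfl, ?_, ?_⟩
    · rw [lastHead_cons_of_ne _ _ _ _ (length_ne_zero_of_firstHead h1)]
      exact h2
    · intro m hm
      rw [marksInternal_cons, h1] at hm
      rcases List.mem_append.mp hm with hm | hm
      · simp only [jl, List.mem_singleton] at hm
        subst hm
        exact ⟨⟨rfl, rfl⟩, TransGen.single hxc⟩
      · exact ⟨(h3 m hm).1, TransGen.head hxc (h3 m hm).2⟩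

open Classical in
/-- a d-connecting walk with an arrowhead at the non-ancestral end. -/
lemma oneHead (hE : Acyclic E) {u v : V} (hk : KCovered E k u v)
    (hvu : ¬ ReflTransGen E v u) (hne : u ≠ v) (c : Finset V) (hc : c.card ≤ k) :
    ∃ W : (ofDAG E).Walk u v, W.DConnecting ↑c ∧ W.lastHead = some true ∧ W.length ≠ 0 := by
  set c0 : Finset V := c.filter (fun z => ¬ ReflTransGen E v z) with hc0def
  obtain ⟨p, _, hd⟩ := kcov_dconn hk c0 (le_trans (Finset.card_filter_le _ _) hc)
  have hc0 : ∀ d ∈ (↑c0 : Set V), ¬ ReflTransGen E v d := by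
    intro d hd'
    simp [hc0def] at hd'
    exact hd'.2
  obtain ⟨hlast, hint⟩ := endHead hE hvu hc0 p hd
  refine ⟨p, ?_, hlast, ?_⟩
  · intro m hm
    refine ⟨fun hcol => ?_, fun hnc hmc => ?_⟩
    · obtain ⟨d, hd1, hd2⟩ := (hd m hm).1 hcol
      refine ⟨d, ?_, hd2⟩
      simp [hc0def] at hd1
      exact hd1.1
    · refine (hd m hm).2 hnc ?_
      simp [hc0def]
      exact ⟨hmc, hint m hm⟩
  · cases p with
    | nil => exact absurd rfl hne
    | cons _ _ _ _ => simp

open Classical in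
/-- a d-connecting walk with arrowheads at both ends. -/
lemma twoHeads (hE : Acyclic E) {u v : V} (hk : KCovered E k u v)
    (huv : ¬ ReflTransGen E u v) (hvu : ¬ ReflTransGen E v u)
    (c : Finset V) (hc : c.card ≤ k) :
    ∃ W : (ofDAG E).Walk u v, W.DConnecting ↑c ∧ W.firstHead = some true
      ∧ W.lastHead = some true := by
  set c0 : Finset V := c.filter (fun z => ¬ ReflTransGen E u z ∧ ¬ ReflTransGen E v z)
    with hc0def
  obtain ⟨p, _, hd⟩ := kcov_dconn hk c0 (le_trans (Finset.card_filter_le _ _) hc)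
  have hc0u : ∀ d ∈ (↑c0 : Set V), ¬ ReflTransGen E u d := by
    intro d hd'
    simp [hc0def] at hd'
    exact hd'.2.1
  have hc0v : ∀ d ∈ (↑c0 : Set V), ¬ ReflTransGen E v d := by
    intro d hd'
    simp [hc0def] at hd'
    exact hd'.2.2
  obtain ⟨hlast, hintv⟩ := endHead hE hvu hc0v p hd
  obtain ⟨hfirst, hintu⟩ := startHead hE huv hc0u p hd
  refine ⟨p, ?_, hfirst, hlast⟩
  intro m hm
  refine ⟨fun hcol => ?_, fun hnc hmc => ?_⟩
  · obtain ⟨d, hd1, hd2⟩ := (hd m hm).1 hcol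
    refine ⟨d, ?_, hd2⟩
    simp [hc0def] at hd1
    exact hd1.1
  · refine (hd m hm).2 hnc ?_
    simp [hc0def]
    exact ⟨hmc, hintu m hm, hintv m hm⟩

/-- endpoint condition for composing edge-realizing walks. -/
def Good (E : V → V → Prop) (c : Finset V) (x : V) (m h : Bool) : Prop :=
  (x ∈ (↑c : Set V) ∧ m = true → h = true) ∧
  (h = true ∧ m = false → ∃ d ∈ (↑c : Set V), ReflTransGen E x d)

lemma dirCase (hE : Acyclic E) {x y : V} (hkcov : KCovered E k x y)
    (htrans : TransGen E x y) (c : Finset V) (hc : c.card ≤ k) :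
    ∃ (W : (ofDAG E).Walk x y) (hx : Bool), W.DConnecting ↑c
      ∧ W.firstHead = some hx ∧ W.lastHead = some true ∧ Good E c x false hx := by
  have hne : x ≠ y := by
    rintro rfl
    exact hE x htrans
  have hvu : ¬ ReflTransGen E y x := by
    intro h
    exact hE y (TransGen.trans_right h htrans)
  by_cases hAnc : ∃ d ∈ (↑c : Set V), ReflTransGen E x d
  · obtain ⟨W, hWd, hWl, hWn⟩ := oneHead hE hkcov hvu hne c hc
    obtain ⟨hx, hWf⟩ := exists_firstHead W hWn
    exact ⟨W, hx, hWd, hWf, hWl, by simp [Good], fun _ => hAnc⟩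
  · obtain ⟨W, hWf, hWl, hWm⟩ := dirWalk htrans
    refine ⟨W, false, ?_, hWf, hWl, by simp [Good], by simp [Good]⟩
    intro m hm
    refine ⟨fun hcol => ?_, fun _ hmc => ?_⟩
    · exact absurd hcol.2 (by simp [(hWm m hm).1.2])
    · exact hAnc ⟨m.1, hmc, (hWm m hm).2.to_reflTransGen⟩

lemma edgeWalk (hE : Acyclic E) (c : Finset V) (hc : c.card ≤ k) {x y : V} {mx my : Bool}
    (hst : (kClosure E k).step x y mx my) :
    ∃ (W : (ofDAG E).Walk x y) (hx hy : Bool), W.DConnecting ↑c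
      ∧ W.firstHead = some hx ∧ W.lastHead = some hy
      ∧ Good E c x mx hx ∧ Good E c y my hy := by
  rcases hst with ⟨rfl, rfl, hdir⟩ | ⟨rfl, rfl, hdir⟩ | ⟨rfl, rfl, hbi⟩
  · obtain ⟨W, hx, hWd, hWf, hWl, hG⟩ := dirCase hE hdir.1 hdir.2 c hc
    exact ⟨W, hx, true, hWd, hWf, hWl, hG, ⟨fun _ => rfl, by simp⟩⟩
  · obtain ⟨W, hy, hWd, hWf, hWl, hG⟩ := dirCase hE hdir.1 hdir.2 c hc
    refine ⟨W.reverse, true, hy, dconnecting_reverse hWd, ?_, ?_, ⟨fun _ => rfl, by simp⟩, hG⟩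
    · rw [firstHead_reverse]; exact hWl
    · rw [lastHead_reverse]; exact hWf
  · have hfacts : KCovered E k x y ∧ ¬ ReflTransGen E x y ∧ ¬ ReflTransGen E y x := by
      rcases hbi with ⟨h1, h2, h3, h4⟩ | ⟨h1, h2, h3, h4⟩
      · exact ⟨h1, h3, h4⟩
      · exact ⟨h2, h4, h3⟩
    obtain ⟨W, hWd, hWf, hWl⟩ := twoHeads hE hfacts.1 hfacts.2.1 hfacts.2.2 c hc
    exact ⟨W, true, true, hWd, hWf, hWl,
      ⟨fun _ => rfl, by simp⟩, ⟨fun _ => rfl, by simp⟩⟩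

end Closure
section Main

open MixedGraph MixedGraph.Walk Relation

variable {V : Type} {E : V → V → Prop} {k : ℕ}

lemma realize (hE : Acyclic E) (c : Finset V) (hc : c.card ≤ k) :
    ∀ {x x2 b : V} (mx m2 : Bool) (st : (kClosure E k).step x x2 mx m2)
      (Q : (kClosure E k).Walk x2 b),
      (Walk.cons mx m2 st Q).DConnecting ↑c →
      ∃ (W : (ofDAG E).Walk x b) (hx : Bool), W.DConnecting ↑c
        ∧ W.firstHead = some hx ∧ Good E c x mx hx
  | x, x2, _, mx, m2, st, .nil _, hP => by
      obtain ⟨W, hx, hy, hWd, hWf, hWl, hGx, hGy⟩ := edgeWalk hE c hc st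
      exact ⟨W, hx, hWd, hWf, hGx⟩
  | x, x2, b, mx, m2, st, .cons (v := x3) m2' m3 st2 Q2, hP => by
      obtain ⟨Wq, hq, hWqD, hWqF, hGoodq⟩ :=
        realize hE c hc m2' m3 st2 Q2 (dconnecting_tail hP)
      obtain ⟨We, hx, hy, hWeD, hWeF, hWeL, hGx, hGy⟩ := edgeWalk hE c hc st
      have Pfact := dconnecting_head hP
      refine ⟨We.append Wq, hx, ?_, ?_, hGx⟩
      · intro m hm
        rw [marksInternal_append, hWeL, hWqF] at hm
        rcases List.mem_append.mp hm with hm | hm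
        · rcases List.mem_append.mp hm with hm | hm
          · exact hWeD m hm
          · obtain ⟨h1, h2, e1, e2, rfl⟩ := mem_jl hm
            injection e1 with e1
            injection e2 with e2
            subst e1
            subst e2
            constructor
            · rintro ⟨hy1, hq1⟩
              by_cases hm2 : m2 = true ∧ m2' = true
              · obtain ⟨d, hd1, hd2⟩ := Pfact.1 hm2
                exact ⟨d, hd1, rtg_cl_to_E hd2⟩
              · by_cases hb : m2 = false
                · exact hGy.2 ⟨hy1, hb⟩
                · have hb' : m2' = false := by
                    cases hm2'' : m2 with
                    | false => exact absurd hm2'' hb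
                    | true =>
                      cases hm2''' : m2' with
                      | true => exact absurd ⟨hm2'', hm2'''⟩ hm2
                      | false => rfl
                  exact hGoodq.2 ⟨hq1, hb'⟩
            · intro hnc hx2c
              by_cases hm2 : m2 = true ∧ m2' = true
              · exact hnc ⟨hGy.1 ⟨hx2c, hm2.1⟩, hGoodq.1 ⟨hx2c, hm2.2⟩⟩
              · exact Pfact.2 hm2 hx2c
        · exact hWqD m hm
      · rw [firstHead_append_of_ne _ _ (length_ne_zero_of_firstHead hWeF)]
        exact hWeF

end Main
/-- the `k`-closure entails exactly the same d-separations with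
conditioning sets of size at most `k` as the DAG. -/
theorem kClosure_same_degree_k_dsep {V : Type} (E : V → V → Prop) (hE : Acyclic E)
    (k : ℕ) :
    ∀ a b, ∀ c : Finset V, c.card ≤ k →
      ((ofDAG E).DSep (↑c) a b ↔ (kClosure E k).DSep (↑c) a b) := by
  intro a b c hc
  have main : (ofDAG E).DConn ↑c a b ↔ (kClosure E k).DConn ↑c a b := by
    constructor
    · exact dconn_D_to_cl hE
    · rintro ⟨P, hPp, hPd⟩
      cases P with
      | nil =>
        exact ⟨.nil a, by simp [MixedGraph.Walk.IsPath],
          fun m hm => absurd hm List.not_mem_nil⟩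
      | cons mx m2 st Q =>
        obtain ⟨W, hx, hWd, _, _⟩ := realize hE c hc mx m2 st Q hPd
        exact walkToPath hE W.length W le_rfl hWd
  rw [MixedGraph.DSep, MixedGraph.DSep, main]
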